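/- arXiv:1606.06633 — 2 statements merged into one kernel-verified Lean document; each statement's English description precedes it below -/
import Mathlib

section
/- For every T > 0, the random variable sup_{t ∈ [0,T]} (N_{nt}/(ν√n))^{1/2} · |μ̂_{nt} − μ| converges to 0 in probability as n → ∞ (with the convention that the term is 0 on the event N_{nt} = 0). -/
open MeasureTheory ProbabilityTheory Filter Topology

/-- Partial sum `S_k = ξ_1 + ⋯ + ξ_k` of the life times (1-indexed), `S_0 = 0`. -/
noncomputable def pSum {Ω : Type*} (ξ : ℕ → Ω → ℝ) (k : ℕ) (ω : Ω) : ℝ :=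
  ∑ i ∈ Finset.Icc 1 k, ξ i ω

/-- Counting process `N_t = max {k ≥ 0 : S_k ≤ t}`. -/
noncomputable def cnt {Ω : Type*} (ξ : ℕ → Ω → ℝ) (t : ℝ) (ω : Ω) : ℕ :=
  sSup {k : ℕ | pSum ξ k ω ≤ t}

/-- Empirical mean `μ̂_t = (1/N_t) ∑_{i=1}^{N_t} ξ_i` of the life times up to time `t`
(equal to `0` by the division-by-zero convention if `N_t = 0`). -/
noncomputable def muHat {Ω : Type*} (ξ : ℕ → Ω → ℝ) (t : ℝ) (ω : Ω) : ℝ :=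
  pSum ξ (cnt ξ t ω) ω / (cnt ξ t ω)

/-!
Write `M_k = S_k - kμ`. Independence and centring give `E M_k^4 ≤ C k^2`; Chebyshev's inequality
and Borel–Cantelli along the blocks `[R^2, (R+1)^2)` upgrade this to `M_k^4 / k^3 → 0` almost
surely, so in particular `S_k ≥ μk/2` eventually and `N_{nT} = O(n)`. The term at time `nt` is
`(N/(ν√n))^{1/2} |M_N| / N` with `N = N_{nt}`, and its fourth power is `(M_N^4/N^3) · N/(ν^2 n)`,
which is uniformly small over `N = O(n)`. Finally the supremum over `t` is dominated by the
measurable countable supremum over all `k` with `S_k ≤ nT`, whose almost sure convergence to `0`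
gives convergence in probability.
-/

section PartialSums
variable {Ω : Type*} (ξ : ℕ → Ω → ℝ)

lemma pSum_zero (ω : Ω) : pSum ξ 0 ω = 0 := by simp [pSum]

lemma pSum_sub_pSum {j k : ℕ} (hjk : j ≤ k) (ω : Ω) :
    pSum ξ k ω - pSum ξ j ω = ∑ i ∈ Finset.Ioc j k, ξ i ω := by
  rw [sub_eq_iff_eq_add', pSum, pSum]
  exact (Finset.sum_Ioc_consecutive _ (Nat.zero_le j) hjk).symm

lemma pSum_sub_const (c : ℝ) (k : ℕ) (ω : Ω) :
    pSum (fun i ω => ξ i ω - c) k ω = pSum ξ k ω - k * c := by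
  simp [pSum, Finset.sum_sub_distrib]

lemma measurable_pSum [MeasurableSpace Ω] (hmeas : ∀ i, Measurable (ξ i)) (k : ℕ) :
    Measurable (pSum ξ k) :=
  Finset.measurable_sum _ fun i _ => hmeas i

end PartialSums

section RealSequences

lemma add_pow_four_le (x y : ℝ) : (x + y) ^ 4 ≤ 8 * (x ^ 4 + y ^ 4) := by
  nlinarith [sq_nonneg (x - y), sq_nonneg (x + y), sq_nonneg (x ^ 2 - y ^ 2),
    sq_nonneg (x ^ 2 + y ^ 2), sq_nonneg (x * y), sq_nonneg x, sq_nonneg y]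

lemma eventually_pow_four_div_pow_three_le {m : ℕ → ℝ} {δ : ℝ} (hδ : 0 ≤ δ)
    (h : ∀ᶠ r in atTop, ∀ k ∈ Finset.Ico ((r + 1) ^ 2) ((r + 1 + 1) ^ 2),
      m k ^ 4 < δ * ((r + 1 : ℕ) : ℝ) ^ 6) :
    ∀ᶠ k : ℕ in atTop, m k ^ 4 / (k : ℝ) ^ 3 ≤ δ := by
  obtain ⟨r₀, hr₀⟩ := eventually_atTop.1 h
  refine eventually_atTop.2 ⟨(r₀ + 1) ^ 2, fun k hk => ?_⟩
  have hR : r₀ + 1 ≤ Nat.sqrt k := Nat.le_sqrt'.2 hk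
  have hRk : Nat.sqrt k ^ 2 ≤ k := Nat.sqrt_le' k
  have hk0 : (0 : ℝ) < k := Nat.cast_pos.2 (lt_of_lt_of_le (by positivity) hk)
  have hlt := hr₀ (Nat.sqrt k - 1) (by omega) k (by
    rw [Nat.sub_add_cancel (by omega), Finset.mem_Ico]
    exact ⟨hRk, Nat.lt_succ_sqrt' k⟩)
  rw [Nat.sub_add_cancel (by omega)] at hlt
  have hRk' : ((Nat.sqrt k : ℕ) : ℝ) ^ 6 ≤ (k : ℝ) ^ 3 := by
    rw [show 6 = 2 * 3 by rfl, pow_mul]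
    gcongr
    exact_mod_cast hRk
  rw [div_le_iff₀ (by positivity)]
  nlinarith

lemma eventually_mul_le_of_tendsto_pow_four_div {s : ℕ → ℝ} {μ : ℝ} (hμ : 0 < μ)
    (h : Tendsto (fun k : ℕ => (s k - k * μ) ^ 4 / (k : ℝ) ^ 3) atTop (𝓝 0)) :
    ∀ᶠ k : ℕ in atTop, μ / 2 * k ≤ s k := by
  filter_upwards [h.eventually (gt_mem_nhds (show 0 < (μ / 2) ^ 4 by positivity)),
    eventually_ge_atTop 1] with k hsmall hk
  have hk : (1 : ℝ) ≤ k := by exact_mod_cast hk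
  rw [div_lt_iff₀ (by positivity)] at hsmall
  have h4 : |s k - k * μ| ^ 4 < (μ / 2 * k) ^ 4 := by
    rw [Even.pow_abs ⟨2, rfl⟩]
    calc _ < (μ / 2) ^ 4 * (k : ℝ) ^ 3 := hsmall
      _ ≤ (μ / 2) ^ 4 * (k : ℝ) ^ 4 := by gcongr; norm_num
      _ = (μ / 2 * k) ^ 4 := by ring
  have := neg_lt_of_abs_lt (lt_of_pow_lt_pow_left₀ 4 (by positivity) h4)
  linarith

lemma bddAbove_setOf_le_of_eventually_mul_le {s : ℕ → ℝ} {c : ℝ} (hc : 0 < c)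
    (h : ∀ᶠ k : ℕ in atTop, c * k ≤ s k) (t : ℝ) : BddAbove {k | s k ≤ t} := by
  obtain ⟨K, hK⟩ := eventually_atTop.1 h
  refine ⟨max K ⌈t / c⌉₊, fun k hk => ?_⟩
  rcases lt_or_ge k K with hkK | hkK
  · exact (le_max_left _ _).trans' hkK.le
  · have hkt : (k : ℝ) ≤ t / c := by
      rw [le_div_iff₀' hc]
      exact (hK k hkK).trans hk
    exact (le_max_right _ _).trans' (Nat.cast_le.1 (hkt.trans (Nat.le_ceil _)))

lemma exists_forall_natCast_le_mul_of_le_mul {s : ℕ → ℝ} {c T : ℝ} (hc : 0 < c) (hT : 0 ≤ T)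
    (h : ∀ᶠ k : ℕ in atTop, c * k ≤ s k) :
    ∃ C : ℝ, ∀ n : ℕ, 1 ≤ n → ∀ k : ℕ, s k ≤ n * T → (k : ℝ) ≤ C * n := by
  obtain ⟨K, hK⟩ := eventually_atTop.1 h
  refine ⟨K + T / c, fun n hn k hk => ?_⟩
  have hn : (1 : ℝ) ≤ n := by exact_mod_cast hn
  have hTc : 0 ≤ T / c := by positivity
  rcases lt_or_ge k K with hkK | hkK
  · have : (k : ℝ) ≤ K := by exact_mod_cast hkK.le
    nlinarith
  · have : (k : ℝ) ≤ T / c * n := by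
      rw [div_mul_eq_mul_div, le_div_iff₀' hc]
      linarith [hK k hkK]
    nlinarith [(K.cast_nonneg : (0 : ℝ) ≤ K)]

lemma bddAbove_range_ite {p : ℕ → Prop} [DecidablePred p] (hp : BddAbove {k | p k})
    (f : ℕ → ℝ) : BddAbove (Set.range fun k => if p k then f k else 0) := by
  refine ((hp.finite.image f).union (Set.finite_singleton 0)).bddAbove.mono ?_
  rintro _ ⟨k, rfl⟩
  dsimp only
  split_ifs with hk
  exacts [Or.inl ⟨k, hk, rfl⟩, Or.inr rfl]

lemma eventually_forall_abs_mul_le {ε : ℕ → ℝ} (h : Tendsto ε atTop (𝓝 0)) (C : ℝ) {δ : ℝ}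
    (hδ : 0 < δ) : ∀ᶠ n : ℕ in atTop, ∀ k : ℕ, (k : ℝ) ≤ C * n → |ε k| * k ≤ δ * n := by
  obtain ⟨K, hK⟩ := Metric.tendsto_atTop.1 h (δ / (|C| + 1)) (by positivity)
  set B := ∑ k ∈ Finset.range K, |ε k| * k
  filter_upwards [tendsto_natCast_atTop_atTop.eventually_ge_atTop (B / δ)] with n hn k hk
  rcases lt_or_ge k K with hkK | hkK
  · calc |ε k| * k ≤ B := Finset.single_le_sum (f := fun i => |ε i| * i)
          (fun i _ => by positivity) (Finset.mem_range.2 hkK)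
      _ ≤ δ * n := by rwa [div_le_iff₀' hδ] at hn
  · have hεk : |ε k| ≤ δ / (|C| + 1) := by simpa using (hK k hkK).le
    have hCn : C * n ≤ (|C| + 1) * n := by
      gcongr
      linarith [le_abs_self C]
    calc |ε k| * k ≤ δ / (|C| + 1) * ((|C| + 1) * n) := by gcongr; exact hk.trans hCn
      _ = δ * n := by field_simp

end RealSequences

section Moments
variable {Ω : Type*} [MeasurableSpace Ω] {P : Measure Ω}

lemma MeasureTheory.MemLp.integrable_pow_of_le [IsFiniteMeasure P] {f : Ω → ℝ} {p j : ℕ}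
    (hf : MemLp f p P) (hj : j ≤ p) : Integrable (fun ω => f ω ^ j) P :=
  (integrable_norm_pow_of_le hf.1 hj hf.integrable_norm_pow').mono' (hf.1.pow j)
    (Eventually.of_forall fun ω => by simp [norm_pow])

lemma ProbabilityTheory.IndepFun.integral_add_pow [IsFiniteMeasure P] {W Y : Ω → ℝ}
    (hWY : IndepFun W Y P) {n : ℕ} (hW : MemLp W n P) (hY : MemLp Y n P) :
    ∫ ω, (W ω + Y ω) ^ n ∂P =
      ∑ m ∈ Finset.range (n + 1), (∫ ω, W ω ^ m ∂P) * (∫ ω, Y ω ^ (n - m) ∂P) * n.choose m := by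
  have hind : ∀ j l : ℕ, IndepFun (fun ω => W ω ^ j) (fun ω => Y ω ^ l) P := fun j l =>
    hWY.comp (measurable_id.pow_const j) (measurable_id.pow_const l)
  simp_rw [add_pow]
  rw [integral_finsetSum]
  · refine Finset.sum_congr rfl fun m _ => ?_
    rw [integral_mul_const, (hind m (n - m)).integral_fun_mul_eq_mul_integral
      (hW.1.pow m) (hY.1.pow (n - m))]
  · intro m hm
    have hm : m ≤ n := Nat.lt_succ_iff.1 (Finset.mem_range.1 hm)
    exact ((hind m (n - m)).integrable_mul (hW.integrable_pow_of_le hm)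
      (hY.integrable_pow_of_le (Nat.sub_le n m))).mul_const _

lemma ProbabilityTheory.iIndepFun.indepFun_fun_finsetSum_of_notMem {X : ℕ → Ω → ℝ}
    (hindep : iIndepFun X P) (hmeas : ∀ i, Measurable (X i)) {s : Finset ℕ} {a : ℕ}
    (ha : a ∉ s) : IndepFun (fun ω => ∑ i ∈ s, X i ω) (X a) P := by
  simpa only [Finset.sum_fn] using hindep.indepFun_finsetSum_of_notMem hmeas ha

variable [IsProbabilityMeasure P]

lemma ProbabilityTheory.IndepFun.integral_add_sq {W Y : Ω → ℝ} (hWY : IndepFun W Y P)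
    (hW : MemLp W 2 P) (hY : MemLp Y 2 P) (hW0 : ∫ ω, W ω ∂P = 0) :
    ∫ ω, (W ω + Y ω) ^ 2 ∂P = ∫ ω, W ω ^ 2 ∂P + ∫ ω, Y ω ^ 2 ∂P := by
  rw [hWY.integral_add_pow hW hY]
  simp [Finset.sum_range_succ, hW0, add_comm]

lemma ProbabilityTheory.IndepFun.integral_add_pow_four {W Y : Ω → ℝ} (hWY : IndepFun W Y P)
    (hW : MemLp W 4 P) (hY : MemLp Y 4 P) (hW0 : ∫ ω, W ω ∂P = 0) (hY0 : ∫ ω, Y ω ∂P = 0) :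
    ∫ ω, (W ω + Y ω) ^ 4 ∂P =
      ∫ ω, W ω ^ 4 ∂P + 6 * (∫ ω, W ω ^ 2 ∂P) * (∫ ω, Y ω ^ 2 ∂P) + ∫ ω, Y ω ^ 4 ∂P := by
  rw [hWY.integral_add_pow hW hY]
  simp [Finset.sum_range_succ, hW0, hY0, Nat.choose]
  ring

lemma integral_sum_sq_le {X : ℕ → Ω → ℝ} (hmeas : ∀ i, Measurable (X i))
    (hindep : iIndepFun X P) (hmem : ∀ i, MemLp (X i) 2 P) (hzero : ∀ i, ∫ ω, X i ω ∂P = 0)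
    {σ2 : ℝ} (hσ2 : ∀ i, ∫ ω, X i ω ^ 2 ∂P ≤ σ2) (s : Finset ℕ) :
    ∫ ω, (∑ i ∈ s, X i ω) ^ 2 ∂P ≤ s.card * σ2 := by
  induction s using Finset.cons_induction with
  | empty => simp
  | cons a s ha ih =>
    have hsum0 : ∫ ω, ∑ i ∈ s, X i ω ∂P = 0 := by
      rw [integral_finsetSum _ fun i _ => (hmem i).integrable one_le_two]
      simp [hzero]
    simp_rw [Finset.sum_cons, add_comm (X a _)]
    rw [(hindep.indepFun_fun_finsetSum_of_notMem hmeas ha).integral_add_sq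
      (memLp_finsetSum s fun i _ => hmem i) (hmem a) hsum0, Finset.card_cons]
    push_cast
    linarith [hσ2 a]

lemma integral_sum_pow_four_le {X : ℕ → Ω → ℝ} (hmeas : ∀ i, Measurable (X i))
    (hindep : iIndepFun X P) (hmem : ∀ i, MemLp (X i) 4 P) (hzero : ∀ i, ∫ ω, X i ω ∂P = 0)
    {σ2 κ : ℝ} (hσ2 : ∀ i, ∫ ω, X i ω ^ 2 ∂P ≤ σ2) (hκ : ∀ i, ∫ ω, X i ω ^ 4 ∂P ≤ κ)
    (s : Finset ℕ) :
    ∫ ω, (∑ i ∈ s, X i ω) ^ 4 ∂P ≤ (3 * σ2 ^ 2 + κ) * s.card ^ 2 := by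
  have hmem2 : ∀ i, MemLp (X i) 2 P := fun i => (hmem i).mono_exponent (by norm_num)
  have hκ0 : 0 ≤ κ := (integral_nonneg fun ω => by positivity).trans (hκ 0)
  induction s using Finset.cons_induction with
  | empty => simp
  | cons a s ha ih =>
    have hsum0 : ∫ ω, ∑ i ∈ s, X i ω ∂P = 0 := by
      rw [integral_finsetSum _ fun i _ => (hmem i).integrable (by norm_num)]
      simp [hzero]
    have hsq := integral_sum_sq_le hmeas hindep hmem2 hzero hσ2 s
    have hcross : (∫ ω, (∑ i ∈ s, X i ω) ^ 2 ∂P) * ∫ ω, X a ω ^ 2 ∂P ≤ s.card * σ2 * σ2 :=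
      mul_le_mul hsq (hσ2 a) (integral_nonneg fun ω => by positivity)
        ((integral_nonneg fun ω => by positivity).trans hsq)
    simp_rw [Finset.sum_cons, add_comm (X a _)]
    rw [(hindep.indepFun_fun_finsetSum_of_notMem hmeas ha).integral_add_pow_four
      (memLp_finsetSum s fun i _ => hmem i) (hmem a) hsum0 (hzero a), Finset.card_cons]
    push_cast
    nlinarith [hκ a, sq_nonneg σ2, (Nat.cast_nonneg s.card : (0 : ℝ) ≤ s.card)]

end Moments

section BorelCantelli
variable {Ω : Type*} [MeasurableSpace Ω] {P : Measure Ω} [IsFiniteMeasure P]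

lemma measure_ge_le_ofReal_integral_div {f : Ω → ℝ} (hf : 0 ≤ᵐ[P] f) (hint : Integrable f P)
    {θ : ℝ} (hθ : 0 < θ) : P {ω | θ ≤ f ω} ≤ ENNReal.ofReal ((∫ ω, f ω ∂P) / θ) := by
  rw [← ENNReal.ofReal_toReal (measure_ne_top P _)]
  refine ENNReal.ofReal_le_ofReal ((le_div_iff₀' hθ).2 ?_)
  exact mul_meas_ge_le_integral_of_nonneg hf hint θ

lemma measure_exists_pow_four_ge_le {M : ℕ → Ω → ℝ} {a : ℕ} {s : Finset ℕ}
    (ha : Integrable (fun ω => M a ω ^ 4) P)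
    (hs : ∀ k ∈ s, Integrable (fun ω => (M k ω - M a ω) ^ 4) P) {θ : ℝ} (hθ : 0 < θ) :
    P {ω | ∃ k ∈ s, 16 * θ ≤ M k ω ^ 4} ≤
      ENNReal.ofReal ((∫ ω, M a ω ^ 4 ∂P + ∑ k ∈ s, ∫ ω, (M k ω - M a ω) ^ 4 ∂P) / θ) := by
  have hsub : {ω | ∃ k ∈ s, 16 * θ ≤ M k ω ^ 4} ⊆
      {ω | θ ≤ M a ω ^ 4} ∪ ⋃ k ∈ s, {ω | θ ≤ (M k ω - M a ω) ^ 4} := by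
    rintro ω ⟨k, hk, hbig⟩
    by_contra hnot
    simp only [Set.mem_union, Set.mem_ofPred_eq, Set.mem_iUnion, not_or, not_exists, not_le]
      at hnot
    have := add_pow_four_le (M a ω) (M k ω - M a ω)
    rw [add_sub_cancel] at this
    linarith [hnot.1, hnot.2 k hk]
  have hmarkov : ∀ {g : Ω → ℝ}, Integrable (fun ω => g ω ^ 4) P →
      P {ω | θ ≤ g ω ^ 4} ≤ ENNReal.ofReal ((∫ ω, g ω ^ 4 ∂P) / θ) := fun hg =>
    measure_ge_le_ofReal_integral_div (Eventually.of_forall fun ω => by positivity) hg hθ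
  calc P {ω | ∃ k ∈ s, 16 * θ ≤ M k ω ^ 4}
      ≤ P {ω | θ ≤ M a ω ^ 4} + ∑ k ∈ s, P {ω | θ ≤ (M k ω - M a ω) ^ 4} :=
        (measure_mono hsub).trans ((measure_union_le _ _).trans
          (add_le_add le_rfl (measure_biUnion_finset_le _ _)))
    _ ≤ ENNReal.ofReal ((∫ ω, M a ω ^ 4 ∂P) / θ) +
          ∑ k ∈ s, ENNReal.ofReal ((∫ ω, (M k ω - M a ω) ^ 4 ∂P) / θ) :=
        add_le_add (hmarkov ha) (Finset.sum_le_sum fun k hk => hmarkov (hs k hk))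
    _ = _ := by
        have hnonneg : ∀ {g : Ω → ℝ}, 0 ≤ (∫ ω, g ω ^ 4 ∂P) / θ := fun {g} =>
          div_nonneg (integral_nonneg fun ω => by positivity) hθ.le
        rw [← ENNReal.ofReal_sum_of_nonneg fun k _ => hnonneg,
          ← ENNReal.ofReal_add hnonneg (Finset.sum_nonneg fun k _ => hnonneg), add_div,
          Finset.sum_div]

lemma measure_exists_mem_Ico_sq_le_pow_four_le {M : ℕ → Ω → ℝ} {C : ℝ} (hM0 : ∀ ω, M 0 ω = 0)
    (hint : ∀ j k, j ≤ k → Integrable (fun ω => (M k ω - M j ω) ^ 4) P)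
    (hbound : ∀ j k, j ≤ k → ∫ ω, (M k ω - M j ω) ^ 4 ∂P ≤ C * ((k - j : ℕ) : ℝ) ^ 2)
    {R : ℕ} (hR : 0 < R) {δ : ℝ} (hδ : 0 < δ) :
    P {ω | ∃ k ∈ Finset.Ico (R ^ 2) ((R + 1) ^ 2), δ * (R : ℝ) ^ 6 ≤ M k ω ^ 4} ≤
      ENNReal.ofReal (208 * C / (δ * (R : ℝ) ^ 2)) := by
  have hR1 : (1 : ℝ) ≤ R := by exact_mod_cast hR
  have hC : 0 ≤ C := (integral_nonneg fun ω => by positivity).trans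
    ((hbound 0 1 zero_le_one).trans_eq (by simp))
  have hfirst : ∫ ω, M (R ^ 2) ω ^ 4 ∂P ≤ C * (R : ℝ) ^ 4 := by
    simpa [hM0] using (hbound 0 (R ^ 2) (Nat.zero_le _)).trans_eq
      (by rw [Nat.sub_zero]; push_cast; ring)
  have hincr : ∀ k ∈ Finset.Ico (R ^ 2) ((R + 1) ^ 2),
      ∫ ω, (M k ω - M (R ^ 2) ω) ^ 4 ∂P ≤ 4 * C * (R : ℝ) ^ 2 := by
    intro k hk
    obtain ⟨hlo, hhi⟩ := Finset.mem_Ico.1 hk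
    have hlen : ((k - R ^ 2 : ℕ) : ℝ) ≤ 2 * R := by
      have : k - R ^ 2 ≤ 2 * R := by rw [add_sq] at hhi; omega
      exact_mod_cast this
    calc _ ≤ C * ((k - R ^ 2 : ℕ) : ℝ) ^ 2 := hbound _ _ hlo
      _ ≤ C * (2 * (R : ℝ)) ^ 2 := by gcongr
      _ = 4 * C * (R : ℝ) ^ 2 := by ring
  have hcard : ((Finset.Ico (R ^ 2) ((R + 1) ^ 2)).card : ℝ) = 2 * R + 1 := by
    rw [Nat.card_Ico, show (R + 1) ^ 2 = R ^ 2 + (2 * R + 1) by ring, Nat.add_sub_cancel_left]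
    push_cast; ring
  rw [show δ * (R : ℝ) ^ 6 = 16 * (δ * (R : ℝ) ^ 6 / 16) by ring]
  refine (measure_exists_pow_four_ge_le (by simpa [hM0] using hint 0 (R ^ 2) (Nat.zero_le _))
    (fun k hk => hint _ _ (Finset.mem_Ico.1 hk).1) (by positivity)).trans
    (ENNReal.ofReal_le_ofReal ?_)
  have hsum := (Finset.sum_le_sum hincr).trans_eq (by rw [Finset.sum_const, nsmul_eq_mul, hcard])
  have hblock : (2 * R + 1 : ℝ) * (4 * C * R ^ 2) ≤ 12 * C * R ^ 4 := by
    have : (2 * R + 1 : ℝ) ≤ 3 * R ^ 2 := by nlinarith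
    nlinarith [mul_nonneg hC (sq_nonneg (R : ℝ))]
  calc _ ≤ 13 * C * (R : ℝ) ^ 4 / (δ * (R : ℝ) ^ 6 / 16) := by gcongr; linarith
    _ = 208 * C / (δ * (R : ℝ) ^ 2) := by field_simp; ring

lemma ae_tendsto_pow_four_div_pow_three {M : ℕ → Ω → ℝ} {C : ℝ} (hM0 : ∀ ω, M 0 ω = 0)
    (hint : ∀ j k, j ≤ k → Integrable (fun ω => (M k ω - M j ω) ^ 4) P)
    (hbound : ∀ j k, j ≤ k → ∫ ω, (M k ω - M j ω) ^ 4 ∂P ≤ C * ((k - j : ℕ) : ℝ) ^ 2) :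
    ∀ᵐ ω ∂P, Tendsto (fun k : ℕ => M k ω ^ 4 / (k : ℝ) ^ 3) atTop (𝓝 0) := by
  have hbad : ∀ q : ℕ, ∀ᵐ ω ∂P, ∀ᶠ r in atTop, ω ∉ {ω | ∃ k ∈ Finset.Ico ((r + 1) ^ 2)
      ((r + 1 + 1) ^ 2), 1 / ((q : ℝ) + 1) * ((r + 1 : ℕ) : ℝ) ^ 6 ≤ M k ω ^ 4} := by
    intro q
    refine ae_eventually_notMem (ne_top_of_le_ne_top ?_ (ENNReal.tsum_le_tsum fun r =>
      measure_exists_mem_Ico_sq_le_pow_four_le hM0 hint hbound r.succ_pos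
        (δ := 1 / ((q : ℝ) + 1)) (by positivity)))
    have hsum : Summable fun r : ℕ => 1 / ((r + 1 : ℕ) : ℝ) ^ 2 :=
      (summable_nat_add_iff 1).2 (Real.summable_one_div_nat_pow.2 one_lt_two)
    refine Summable.tsum_ofReal_ne_top ((hsum.mul_left (208 * C * ((q : ℝ) + 1))).congr ?_)
    intro r
    field_simp
  filter_upwards [ae_all_iff.2 hbad] with ω hω
  refine tendsto_order.2 ⟨fun b hb => Eventually.of_forall fun k =>
    hb.trans_le (by positivity), fun b hb => ?_⟩
  obtain ⟨q, hq⟩ := exists_nat_one_div_lt hb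
  refine (eventually_pow_four_div_pow_three_le (by positivity) ((hω q).mono fun r hr => ?_)).mono
    fun k hk => hk.trans_lt hq
  simpa using hr

end BorelCantelli

lemma ae_tendsto_pSum_sub_mul_pow_four_div_pow_three {Ω : Type*} [MeasurableSpace Ω]
    {P : Measure Ω} [IsProbabilityMeasure P] {ξ : ℕ → Ω → ℝ} (hmeas : ∀ i, Measurable (ξ i))
    (hindep : iIndepFun ξ P) (hident : ∀ i, IdentDistrib (ξ i) (ξ 1) P P)
    (hL4 : MemLp (ξ 1) 4 P) :
    ∀ᵐ ω ∂P, Tendsto (fun k : ℕ => (pSum ξ k ω - k * ∫ ω, ξ 1 ω ∂P) ^ 4 / (k : ℝ) ^ 3)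
      atTop (𝓝 0) := by
  set μ := ∫ ω, ξ 1 ω ∂P
  set X : ℕ → Ω → ℝ := fun i ω => ξ i ω - μ
  have hXident : ∀ i, IdentDistrib (X i) (X 1) P P :=
    fun i => (hident i).comp (measurable_id.sub_const μ)
  have hXmem : ∀ i, MemLp (X i) 4 P := fun i => (hXident i).symm.memLp_snd (hL4.sub (memLp_const μ))
  have hmoment : ∀ i j, ∫ ω, X i ω ^ j ∂P = ∫ ω, X 1 ω ^ j ∂P :=
    fun i j => ((hXident i).comp (measurable_id.pow_const j)).integral_eq
  have hzero : ∀ i, ∫ ω, X i ω ∂P = 0 := fun i => by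
    simpa [X, μ, integral_sub (hL4.integrable (by norm_num)) (integrable_const μ)] using hmoment i 1
  have hsum := integral_sum_pow_four_le (fun i => (hmeas i).sub_const μ)
    (hindep.comp _ fun _ => measurable_id.sub_const μ) hXmem hzero
    (fun i => (hmoment i 2).le) (fun i => (hmoment i 4).le)
  have hincr : ∀ j k, j ≤ k → (fun ω => (pSum X k ω - pSum X j ω) ^ 4) =
      fun ω => (∑ i ∈ Finset.Ioc j k, X i ω) ^ 4 := fun j k hjk => by
    simp_rw [pSum_sub_pSum X hjk]
  have hmain := ae_tendsto_pow_four_div_pow_three (pSum_zero X)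
    (fun j k hjk => by
      rw [hincr j k hjk]
      exact (memLp_finsetSum _ fun i _ => hXmem i).integrable_pow_of_le le_rfl)
    (fun j k hjk => by
      rw [hincr j k hjk, ← Nat.card_Ioc]
      exact hsum _)
  simpa only [X, pSum_sub_const] using hmain

lemma tendstoInMeasure_zero_of_abs_le {Ω : Type*} [MeasurableSpace Ω] {P : Measure Ω}
    [IsFiniteMeasure P] {f H : ℕ → Ω → ℝ} (hH : ∀ n, AEStronglyMeasurable (H n) P)
    (hfH : ∀ᵐ ω ∂P, ∀ n, |f n ω| ≤ H n ω)
    (hlim : ∀ᵐ ω ∂P, Tendsto (fun n => H n ω) atTop (𝓝 0)) :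
    TendstoInMeasure P f atTop fun _ => 0 := by
  intro ε hε
  refine tendsto_of_tendsto_of_tendsto_of_le_of_le tendsto_const_nhds
    (tendstoInMeasure_of_tendsto_ae hH hlim ε hε) (fun _ => bot_le) fun n => measure_mono_ae ?_
  filter_upwards [hfH] with ω hω hmem
  refine le_trans hmem ?_
  simp only [edist_dist, Real.dist_eq, sub_zero]
  exact ENNReal.ofReal_le_ofReal ((hω n).trans (le_abs_self _))

section Deterministic
variable {Ω : Type*} (ξ : ℕ → Ω → ℝ) (μ ν : ℝ)

/-- At `k = N_{nt}` this is the theorem's term, also when `N_{nt} = 0`, where both vanish. -/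
noncomputable def scaledMeanDev (n k : ℕ) (ω : Ω) : ℝ :=
  Real.sqrt (k / (ν * Real.sqrt n)) * |pSum ξ k ω / k - μ|

lemma scaledMeanDev_nonneg (n k : ℕ) (ω : Ω) : 0 ≤ scaledMeanDev ξ μ ν n k ω :=
  mul_nonneg (Real.sqrt_nonneg _) (abs_nonneg _)

lemma ite_cnt_eq_scaledMeanDev (n : ℕ) (t : ℝ) (ω : Ω) :
    (if cnt ξ t ω = 0 then 0
      else Real.sqrt ((cnt ξ t ω : ℝ) / (ν * Real.sqrt n)) * |muHat ξ t ω - μ|) =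
      scaledMeanDev ξ μ ν n (cnt ξ t ω) ω := by
  split_ifs with h
  · simp [scaledMeanDev, h]
  · rfl

lemma scaledMeanDev_pow_four (hν : 0 ≤ ν) (n k : ℕ) (ω : Ω) :
    scaledMeanDev ξ μ ν n k ω ^ 4 =
      (pSum ξ k ω - k * μ) ^ 4 / (k : ℝ) ^ 3 * k / (ν ^ 2 * n) := by
  rcases Nat.eq_zero_or_pos k with rfl | hk
  · simp [scaledMeanDev]
  have hk : (k : ℝ) ≠ 0 := by positivity
  rw [scaledMeanDev, mul_pow, show (4 : ℕ) = 2 * 2 by rfl, pow_mul, pow_mul,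
    Real.sq_sqrt (by positivity), sq_abs, div_pow, mul_pow, Real.sq_sqrt (by positivity)]
  field_simp

/-- A measurable majorant of the supremum over `t ∈ [0, T]`: every `N_{nt}` is among these `k`. -/
noncomputable def supScaledMeanDev (T : ℝ) (n : ℕ) (ω : Ω) : ℝ :=
  ⨆ k : ℕ, if pSum ξ k ω ≤ n * T then scaledMeanDev ξ μ ν n k ω else 0

lemma supScaledMeanDev_nonneg (T : ℝ) (n : ℕ) (ω : Ω) : 0 ≤ supScaledMeanDev ξ μ ν T n ω :=
  Real.iSup_nonneg fun k => by split_ifs <;> [exact scaledMeanDev_nonneg ξ μ ν n k ω; rfl]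

lemma measurable_supScaledMeanDev [MeasurableSpace Ω] (hmeas : ∀ i, Measurable (ξ i)) (T : ℝ)
    (n : ℕ) : Measurable (supScaledMeanDev ξ μ ν T n) := by
  have := measurable_pSum ξ hmeas
  refine Measurable.iSup fun k => Measurable.ite (measurableSet_le (this k) measurable_const) ?_
    measurable_const
  unfold scaledMeanDev
  fun_prop

end Deterministic

section Path
variable {Ω : Type*} (ξ : ℕ → Ω → ℝ) {μ ν T : ℝ} {ω : Ω}

lemma pSum_cnt_le {t : ℝ} (ht : 0 ≤ t) (hbdd : BddAbove {k | pSum ξ k ω ≤ t}) :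
    pSum ξ (cnt ξ t ω) ω ≤ t :=
  Nat.sSup_mem ⟨0, by simpa [pSum_zero] using ht⟩ hbdd

lemma iSup_scaledMeanDev_cnt_le_supScaledMeanDev {c : ℝ} (hc : 0 < c)
    (hgrowth : ∀ᶠ k : ℕ in atTop, c * k ≤ pSum ξ k ω) (n : ℕ) :
    ⨆ t : Set.Icc (0 : ℝ) T, scaledMeanDev ξ μ ν n (cnt ξ (n * t) ω) ω ≤
      supScaledMeanDev ξ μ ν T n ω := by
  have hbdd := bddAbove_setOf_le_of_eventually_mul_le hc hgrowth
  refine Real.iSup_le (fun t => ?_) (supScaledMeanDev_nonneg ξ μ ν T n ω)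
  have hnt : (n : ℝ) * t ≤ n * T := mul_le_mul_of_nonneg_left t.2.2 n.cast_nonneg
  have hN := pSum_cnt_le ξ (mul_nonneg n.cast_nonneg t.2.1) (hbdd _)
  calc scaledMeanDev ξ μ ν n (cnt ξ (n * t) ω) ω
      = if pSum ξ (cnt ξ (n * t) ω) ω ≤ n * T then
          scaledMeanDev ξ μ ν n (cnt ξ (n * t) ω) ω else 0 := (if_pos (hN.trans hnt)).symm
    _ ≤ supScaledMeanDev ξ μ ν T n ω :=
        le_ciSup (bddAbove_range_ite (hbdd (n * T)) (scaledMeanDev ξ μ ν n · ω)) _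

lemma tendsto_supScaledMeanDev (hμ : 0 < μ) (hν : 0 < ν) (hT : 0 ≤ T)
    (h : Tendsto (fun k : ℕ => (pSum ξ k ω - k * μ) ^ 4 / (k : ℝ) ^ 3) atTop (𝓝 0)) :
    Tendsto (fun n => supScaledMeanDev ξ μ ν T n ω) atTop (𝓝 0) := by
  obtain ⟨C, hlin⟩ := exists_forall_natCast_le_mul_of_le_mul (half_pos hμ) hT
    (eventually_mul_le_of_tendsto_pow_four_div hμ h)
  rw [Metric.tendsto_atTop]
  intro ε hε
  obtain ⟨n₀, hn₀⟩ := eventually_atTop.1 ((eventually_forall_abs_mul_le h C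
    (show 0 < ν ^ 2 * (ε / 2) ^ 4 by positivity)).and (eventually_ge_atTop 1))
  refine ⟨n₀, fun n hn => ?_⟩
  obtain ⟨hsmall, hn1⟩ := hn₀ n hn
  have hn0 : (0 : ℝ) < n := by exact_mod_cast hn1
  have hterm : ∀ k, (if pSum ξ k ω ≤ n * T then scaledMeanDev ξ μ ν n k ω else 0) ≤ ε / 2 := by
    intro k
    split_ifs with hk
    · refine le_of_pow_le_pow_left₀ (by norm_num : 4 ≠ 0) (by positivity) ?_
      rw [scaledMeanDev_pow_four ξ μ ν hν.le, div_le_iff₀ (by positivity)]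
      calc (pSum ξ k ω - k * μ) ^ 4 / (k : ℝ) ^ 3 * k
          ≤ |(pSum ξ k ω - k * μ) ^ 4 / (k : ℝ) ^ 3| * k := by gcongr; exact le_abs_self _
        _ ≤ ν ^ 2 * (ε / 2) ^ 4 * n := hsmall k (hlin n hn1 k hk)
        _ = (ε / 2) ^ 4 * (ν ^ 2 * n) := by ring
    · positivity
  rw [Real.dist_eq, sub_zero, abs_of_nonneg (supScaledMeanDev_nonneg ξ μ ν T n ω)]
  exact (Real.iSup_le hterm (by positivity)).trans_lt (half_lt_self hε)

end Path

theorem sup_sqrt_count_mul_mean_dev_tendsto_zero_in_probability_general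
    {Ω : Type*} [MeasurableSpace Ω] (P : Measure Ω) [IsProbabilityMeasure P]
    (ξ : ℕ → Ω → ℝ) (hmeas : ∀ i, Measurable (ξ i))
    (hindep : iIndepFun ξ P)
    (hident : ∀ i, IdentDistrib (ξ i) (ξ 1) P P)
    (hL4 : MemLp (ξ 1) 4 P)
    (μ : ℝ) (hμ : μ = ∫ ω, ξ 1 ω ∂P) (hμpos : 0 < μ)
    (ν : ℝ) (hνpos : 0 < ν)
    (T : ℝ) (hT : 0 < T) :
    TendstoInMeasure P
      (fun (n : ℕ) (ω : Ω) =>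
        ⨆ t : Set.Icc (0 : ℝ) T,
          if cnt ξ ((n : ℝ) * t) ω = 0 then 0
          else Real.sqrt ((cnt ξ ((n : ℝ) * t) ω : ℝ) / (ν * Real.sqrt n)) *
            |muHat ξ ((n : ℝ) * t) ω - μ|)
      atTop (fun _ => (0 : ℝ)) := by
  have hlaw := ae_tendsto_pSum_sub_mul_pow_four_div_pow_three hmeas hindep hident hL4
  rw [← hμ] at hlaw
  simp only [ite_cnt_eq_scaledMeanDev]
  refine tendstoInMeasure_zero_of_abs_le
    (fun n => (measurable_supScaledMeanDev ξ μ ν hmeas T n).aestronglyMeasurable) ?_ ?_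
  · filter_upwards [hlaw] with ω hω n
    rw [abs_of_nonneg (Real.iSup_nonneg fun t => scaledMeanDev_nonneg ξ μ ν n _ ω)]
    exact iSup_scaledMeanDev_cnt_le_supScaledMeanDev ξ (half_pos hμpos)
      (eventually_mul_le_of_tendsto_pow_four_div hμpos hω) n
  · filter_upwards [hlaw] with ω hω
    exact tendsto_supScaledMeanDev ξ hμpos hνpos hT.le hω

/-- `sup_{t ∈ [0,T]} (N_{nt}/(ν√n))^{1/2} · |μ̂_{nt} − μ| → 0` in probability
as `n → ∞`, with the convention that the term is `0` on the event `N_{nt} = 0`. -/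
theorem sup_sqrt_count_mul_mean_dev_tendsto_zero_in_probability
    {Ω : Type*} [MeasurableSpace Ω] (P : Measure Ω) [IsProbabilityMeasure P]
    (ξ : ℕ → Ω → ℝ) (hmeas : ∀ i, Measurable (ξ i))
    (hindep : iIndepFun ξ P)
    (hident : ∀ i, IdentDistrib (ξ i) (ξ 1) P P)
    (hpos : ∀ i, ∀ᵐ ω ∂P, 0 < ξ i ω)
    (hL4 : MemLp (ξ 1) 4 P)
    (μ : ℝ) (hμ : μ = ∫ ω, ξ 1 ω ∂P) (hμpos : 0 < μ)
    (ν : ℝ) (hν : ν ^ 2 = variance (fun ω => (ξ 1 ω - μ) ^ 2) P) (hνpos : 0 < ν)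
    (T : ℝ) (hT : 0 < T) :
    TendstoInMeasure P
      (fun (n : ℕ) (ω : Ω) =>
        ⨆ t : Set.Icc (0 : ℝ) T,
          if cnt ξ ((n : ℝ) * t) ω = 0 then 0
          else Real.sqrt ((cnt ξ ((n : ℝ) * t) ω : ℝ) / (ν * Real.sqrt n)) *
            |muHat ξ ((n : ℝ) * t) ω - μ|)
      atTop (fun _ => (0 : ℝ)) :=
  sup_sqrt_count_mul_mean_dev_tendsto_zero_in_probability_general P ξ hmeas hindep hident hL4 μ hμ
    hμpos ν hνpos T hT
end

section
/- Almost surely, sup_{t ∈ [h,T−h]} |(N_{n(t+h)} − N_{nt})/(nh/μ_ri(h,t)) − 1| → 0 and sup_{t ∈ [h,T−h]} |(N_{nt} − N_{n(t−h)})/(nh/μ_le(h,t)) − 1| → 0 as n → ∞. -/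
open MeasureTheory ProbabilityTheory Filter Topology

/-- Counting process of the compound process `Φ^{(n)}`, which consists of the points of
the renewal process generated by `ξ1` in `[0, nc]` together with the points of the
renewal process generated by `ξ2` in `(nc, nT]`. -/
noncomputable def Ncomp {Ω : Type*} (ξ1 ξ2 : ℕ → Ω → ℝ) (c : ℝ) (n : ℕ) (t : ℝ)
    (ω : Ω) : ℕ :=
  if t ≤ (n : ℝ) * c then cnt ξ1 t ω
  else cnt ξ1 ((n : ℝ) * c) ω + (cnt ξ2 t ω - cnt ξ2 ((n : ℝ) * c) ω)

/-- The `i`-th event time of the compound process `Φ^{(n)}`: for `i ≤ N₁(nc)` it is the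
`i`-th point of the first renewal process, afterwards it is the
`(N₂(nc) + (i − N₁(nc)))`-th point of the second renewal process. -/
noncomputable def Tev {Ω : Type*} (ξ1 ξ2 : ℕ → Ω → ℝ) (c : ℝ) (n : ℕ) (i : ℕ)
    (ω : Ω) : ℝ :=
  if i ≤ cnt ξ1 ((n : ℝ) * c) ω then pSum ξ1 i ω
  else pSum ξ2 (cnt ξ2 ((n : ℝ) * c) ω + (i - cnt ξ1 ((n : ℝ) * c) ω)) ω

/-- The `i`-th life time of the compound process `Φ^{(n)}`. -/
noncomputable def lifeT {Ω : Type*} (ξ1 ξ2 : ℕ → Ω → ℝ) (c : ℝ) (n : ℕ) (i : ℕ)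
    (ω : Ω) : ℝ :=
  Tev ξ1 ξ2 c n i ω - Tev ξ1 ξ2 c n (i - 1) ω

/-- The limiting right-window mean function `μ_ri(h,t)`. -/
noncomputable def muRi (μ1 μ2 c h t : ℝ) : ℝ :=
  if t ≤ c - h then μ1
  else if c ≤ t then μ2
  else h / ((c - t) / μ1 + (t + h - c) / μ2)

/-- The limiting left-window mean function `μ_le(h,t)`. -/
noncomputable def muLe (μ1 μ2 c h t : ℝ) : ℝ :=
  if t ≤ c then μ1
  else if c + h ≤ t then μ2
  else h / ((c - (t - h)) / μ1 + (t - c) / μ2)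

open Set

/-!
By the strong law of large numbers the partial sums of both life-time sequences satisfy
`S_k / k → μ` almost surely, and since `S_{N_t} ≤ t < S_{N_t + 1}` this gives `N_t / t → 1 / μ`.
Hence, pathwise, `N_{ns} / n` converges for every `s ∈ [0, T]` to the piecewise linear
`Λ(s) = min(s, c) / μ1 + (s - c)⁺ / μ2`. These functions of `s` are nondecreasing and `Λ` is
continuous, so by Pólya's argument the convergence is uniform on `[0, T]`. Finally
`Λ(t + h) - Λ(t) = h / μ_ri(h, t) ≥ h / max(μ1, μ2)`, so the window counts divided by
`nh / μ_ri(h, t)` tend to `1` uniformly; the left window is the right one shifted by `h`.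
-/

lemma exists_finset_bracket_Icc {a b δ : ℝ} (hab : a ≤ b) (hδ : 0 < δ) :
    ∃ G : Finset ℝ, ↑G ⊆ Icc a b ∧ ∀ y ∈ Icc a b,
      ∃ x ∈ G, ∃ x' ∈ G, x ≤ y ∧ y ≤ x' ∧ dist y x < δ ∧ dist y x' < δ := by
  set Δ := δ / 2
  have hΔ : 0 < Δ := half_pos hδ
  have hΔδ : Δ < δ := half_lt_self hδ
  let p : ℕ → ℝ := fun i => min (a + i * Δ) b
  refine ⟨(Finset.range (⌈(b - a) / Δ⌉₊ + 2)).image p, ?_, fun y hy => ?_⟩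
  · intro x hx
    obtain ⟨i, -, rfl⟩ := Finset.mem_image.mp hx
    exact ⟨le_min (by nlinarith [i.cast_nonneg (α := ℝ)]) hab, min_le_right _ _⟩
  set j := ⌊(y - a) / Δ⌋₊
  have hya : 0 ≤ (y - a) / Δ := div_nonneg (by linarith [hy.1]) hΔ.le
  have hj_le : (j : ℝ) * Δ ≤ y - a := (le_div_iff₀ hΔ).mp (Nat.floor_le hya)
  have hj_gt : y - a < j * Δ + Δ := by
    linarith [(div_lt_iff₀ hΔ).mp (Nat.lt_floor_add_one ((y - a) / Δ))]
  have hj_ceil : j ≤ ⌈(b - a) / Δ⌉₊ :=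
    (Nat.floor_le_floor (by gcongr; exact hy.2)).trans (Nat.floor_le_ceil _)
  have hp_j : p j = a + j * Δ := min_eq_left (by linarith [hy.2])
  have hp_succ_le : p (j + 1) ≤ a + j * Δ + Δ := by
    simpa only [p, Nat.cast_succ, add_mul, one_mul, add_assoc] using min_le_left _ _
  have hle_p_succ : y ≤ p (j + 1) := le_min (by push_cast; linarith) hy.2
  refine ⟨p j, Finset.mem_image_of_mem p (Finset.mem_range.mpr (by omega)),
    p (j + 1), Finset.mem_image_of_mem p (Finset.mem_range.mpr (by omega)),
    by linarith, hle_p_succ, ?_, ?_⟩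
  · rw [Real.dist_eq, abs_of_nonneg (by linarith)]
    linarith
  · rw [Real.dist_eq, abs_of_nonpos (by linarith)]
    linarith

theorem tendstoUniformlyOn_Icc_of_monotoneOn {f : ℕ → ℝ → ℝ} {g : ℝ → ℝ} {a b : ℝ}
    (hf : ∀ n, MonotoneOn (f n) (Icc a b)) (hg : ContinuousOn g (Icc a b))
    (hfg : ∀ x ∈ Icc a b, Tendsto (fun n => f n x) atTop (𝓝 (g x))) :
    TendstoUniformlyOn f g atTop (Icc a b) := by
  rcases lt_or_ge b a with hba | hab
  · rw [Icc_eq_empty_of_lt hba]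
    exact tendstoUniformlyOn_empty
  rw [Metric.tendstoUniformlyOn_iff]
  intro ε hε
  obtain ⟨δ, hδ, hgδ⟩ := Metric.uniformContinuousOn_iff.mp
    (isCompact_Icc.uniformContinuousOn_of_continuous hg) (ε / 2) (half_pos hε)
  obtain ⟨G, hGI, hG⟩ := exists_finset_bracket_Icc hab hδ
  have hconvG : ∀ᶠ n in atTop, ∀ x ∈ G, dist (f n x) (g x) < ε / 2 :=
    (eventually_all_finset G).mpr fun x hx =>
      Metric.tendsto_nhds.mp (hfg x (hGI hx)) _ (half_pos hε)
  filter_upwards [hconvG] with n hn y hy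
  obtain ⟨x, hx, x', hx', hxy, hyx', hδx, hδx'⟩ := hG y hy
  -- monotonicity traps `f n y` between `f n x` and `f n x'`, both within `ε / 2` of `g y`
  have h1 := hgδ y hy x (hGI hx) hδx
  have h2 := hgδ y hy x' (hGI hx') hδx'
  have h3 := hn x hx
  have h4 := hn x' hx'
  have hmx := hf n (hGI hx) hy hxy
  have hmx' := hf n hy (hGI hx') hyx'
  rw [Real.dist_eq, abs_lt] at h1 h2 h3 h4 ⊢
  constructor <;> linarith [h1.1, h1.2, h2.1, h2.2, h3.1, h3.2, h4.1, h4.2]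

theorem TendstoUniformlyOn.div_limit_one {ι α : Type*} {l : Filter ι} {s : Set α}
    {F : ι → α → ℝ} {f : α → ℝ} {δ : ℝ} (hF : TendstoUniformlyOn F f l s) (hδ : 0 < δ)
    (hf : ∀ x ∈ s, δ ≤ f x) :
    TendstoUniformlyOn (fun i x => F i x / f x) (fun _ => 1) l s := by
  rw [Metric.tendstoUniformlyOn_iff] at hF ⊢
  intro ε hε
  filter_upwards [hF (ε * δ) (by positivity)] with i hi x hx
  have hfx : 0 < f x := hδ.trans_le (hf x hx)
  rw [Real.dist_eq, one_sub_div hfx.ne', abs_div, abs_of_pos hfx, div_lt_iff₀ hfx,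
    ← Real.dist_eq]
  calc dist (f x) (F i x) < ε * δ := hi x hx
    _ ≤ ε * f x := by gcongr; exact hf x hx

section Renewal

variable {Ω : Type*} {ξ : ℕ → Ω → ℝ} {ω : Ω} {μ : ℝ}

lemma pSum_eq_sum_range (k : ℕ) : pSum ξ k ω = ∑ i ∈ Finset.range k, ξ (i + 1) ω := by
  induction k with
  | zero => simp [pSum]
  | succ k ih =>
    rw [Finset.sum_range_succ, ← ih, pSum, pSum, Finset.sum_Icc_succ_top (by omega)]

lemma pSum_strictMono (hpos : ∀ i, 0 < ξ i ω) : StrictMono (pSum ξ · ω) :=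
  strictMono_nat_of_lt_succ fun k => by
    simpa [pSum_eq_sum_range, Finset.sum_range_succ] using hpos (k + 1)

lemma tendsto_pSum_atTop (hμ : 0 < μ)
    (hS : Tendsto (fun k : ℕ => pSum ξ k ω / k) atTop (𝓝 μ)) :
    Tendsto (pSum ξ · ω) atTop atTop := by
  refine (hS.pos_mul_atTop hμ tendsto_natCast_atTop_atTop).congr' ?_
  filter_upwards [eventually_ne_atTop 0] with k hk
  field_simp

lemma le_cnt_iff (hpos : ∀ i, 0 < ξ i ω) (hT : Tendsto (pSum ξ · ω) atTop atTop)
    {t : ℝ} (ht : 0 ≤ t) {k : ℕ} : k ≤ cnt ξ t ω ↔ pSum ξ k ω ≤ t := by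
  have hbdd : BddAbove {k : ℕ | pSum ξ k ω ≤ t} := by
    obtain ⟨K, hK⟩ := (tendsto_atTop.mp hT (t + 1)).exists_forall_of_atTop
    refine ⟨K, fun k (hk : pSum ξ k ω ≤ t) => not_lt.mp fun hKk => ?_⟩
    linarith [hK k hKk.le]
  have hne : {k : ℕ | pSum ξ k ω ≤ t}.Nonempty := ⟨0, by simpa [pSum] using ht⟩
  refine ⟨fun hk => ((pSum_strictMono hpos).monotone hk).trans (Nat.sSup_mem hne hbdd),
    fun hk => le_csSup hbdd hk⟩

lemma cnt_mono (hpos : ∀ i, 0 < ξ i ω) (hT : Tendsto (pSum ξ · ω) atTop atTop)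
    {t t' : ℝ} (ht : 0 ≤ t) (htt' : t ≤ t') : cnt ξ t ω ≤ cnt ξ t' ω :=
  (le_cnt_iff hpos hT (ht.trans htt')).mpr (((le_cnt_iff hpos hT ht).mp le_rfl).trans htt')

lemma cnt_zero (hpos : ∀ i, 0 < ξ i ω) (hT : Tendsto (pSum ξ · ω) atTop atTop) :
    cnt ξ 0 ω = 0 := by
  by_contra h
  have h1 := (le_cnt_iff hpos hT le_rfl).mp (Nat.one_le_iff_ne_zero.mpr h)
  exact (hpos 1).not_ge (by simpa [pSum] using h1)

lemma tendsto_cnt_atTop (hpos : ∀ i, 0 < ξ i ω) (hT : Tendsto (pSum ξ · ω) atTop atTop) :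
    Tendsto (cnt ξ · ω) atTop atTop :=
  tendsto_atTop_atTop.mpr fun k => ⟨max (pSum ξ k ω) 0, fun _ ht =>
    (le_cnt_iff hpos hT ((le_max_right _ _).trans ht)).mpr ((le_max_left _ _).trans ht)⟩

theorem tendsto_cnt_div (hpos : ∀ i, 0 < ξ i ω) (hμ : 0 < μ)
    (hS : Tendsto (fun k : ℕ => pSum ξ k ω / k) atTop (𝓝 μ)) :
    Tendsto (fun t => (cnt ξ t ω : ℝ) / t) atTop (𝓝 μ⁻¹) := by
  have hT := tendsto_pSum_atTop hμ hS
  have hN := tendsto_cnt_atTop hpos hT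
  have hinv : Tendsto (fun k : ℕ => (k : ℝ) / pSum ξ k ω) atTop (𝓝 μ⁻¹) := by
    simpa only [inv_div] using hS.inv₀ hμ.ne'
  have hinv_succ : Tendsto
      (fun k : ℕ => (k : ℝ) / (k + 1) * ((k + 1 : ℕ) / pSum ξ (k + 1) ω)) atTop (𝓝 μ⁻¹) := by
    simpa using
      (tendsto_natCast_div_add_atTop (1 : ℝ)).mul (hinv.comp (tendsto_add_atTop_nat 1))
  -- `S_{N_t} ≤ t < S_{N_t + 1}` squeezes `N_t / t` between `N_t / S_{N_t + 1}` and `N_t / S_{N_t}`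
  refine tendsto_of_tendsto_of_tendsto_of_le_of_le' (hinv_succ.comp hN) (hinv.comp hN) ?_ ?_
  · filter_upwards [eventually_gt_atTop 0] with t ht
    have hlt : t < pSum ξ (cnt ξ t ω + 1) ω :=
      not_le.mp fun h => (cnt ξ t ω).not_succ_le_self ((le_cnt_iff hpos hT ht.le).mpr h)
    simp only [Function.comp_apply, Nat.cast_succ]
    rw [div_mul_div_cancel₀ (by positivity)]
    exact div_le_div_of_nonneg_left (by positivity) ht hlt.le
  · filter_upwards [eventually_ge_atTop 0, hN.eventually_ge_atTop 1] with t ht hN1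
    have hS0 : 0 < pSum ξ (cnt ξ t ω) ω := by
      simpa [pSum] using pSum_strictMono hpos hN1
    exact div_le_div_of_nonneg_left (by positivity) hS0 ((le_cnt_iff hpos hT ht).mp le_rfl)

lemma tendsto_cnt_mul_div (hpos : ∀ i, 0 < ξ i ω) (hμ : 0 < μ)
    (hS : Tendsto (fun k : ℕ => pSum ξ k ω / k) atTop (𝓝 μ)) {s : ℝ} (hs : 0 ≤ s) :
    Tendsto (fun n : ℕ => (cnt ξ (n * s) ω : ℝ) / n) atTop (𝓝 (s / μ)) := by
  rcases hs.eq_or_lt with rfl | hs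
  · simp [cnt_zero hpos (tendsto_pSum_atTop hμ hS)]
  have h := ((tendsto_cnt_div hpos hμ hS).comp
    (tendsto_natCast_atTop_atTop.atTop_mul_const hs)).mul_const s
  rw [inv_mul_eq_div] at h
  refine h.congr' ?_
  filter_upwards [eventually_ne_atTop 0] with n hn
  simp only [Function.comp_apply]
  field_simp

end Renewal

section ChangePoint

/-- The almost sure limit of `N_{ns} / n`: the cumulative intensity of a point process
with rate `1 / μ1` before `c` and rate `1 / μ2` after. -/
noncomputable def cumIntensity (μ1 μ2 c s : ℝ) : ℝ :=
  min s c / μ1 + max (s - c) 0 / μ2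

variable {μ1 μ2 c h : ℝ}

lemma continuous_cumIntensity : Continuous (cumIntensity μ1 μ2 c) := by
  unfold cumIntensity
  fun_prop

lemma cumIntensity_add_sub (hh : 0 < h) (t : ℝ) :
    cumIntensity μ1 μ2 c (t + h) - cumIntensity μ1 μ2 c t = h / muRi μ1 μ2 c h t := by
  unfold cumIntensity muRi
  split_ifs with h1 h2
  · rw [min_eq_left (by linarith), min_eq_left (by linarith), max_eq_right (by linarith),
      max_eq_right (by linarith)]
    ring
  · rw [min_eq_right (by linarith), min_eq_right (by linarith), max_eq_left (by linarith),
      max_eq_left (by linarith)]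
    ring
  · rw [min_eq_right (by linarith), min_eq_left (by linarith), max_eq_left (by linarith),
      max_eq_right (by linarith), div_div_cancel₀ hh.ne']
    ring

lemma div_max_le_cumIntensity_sub (hμ1 : 0 < μ1) (hμ2 : 0 < μ2) (hh : 0 ≤ h) (t : ℝ) :
    h / max μ1 μ2 ≤ cumIntensity μ1 μ2 c (t + h) - cumIntensity μ1 μ2 c t := by
  -- the window splits into `a` time units before `c` and `b` after
  set a := min (t + h) c - min t c
  set b := max (t + h - c) 0 - max (t - c) 0
  have ha : 0 ≤ a := sub_nonneg.mpr (min_le_min_right _ (by linarith))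
  have hb : 0 ≤ b := sub_nonneg.mpr (max_le_max_right _ (by linarith))
  have hsplit : ∀ s, min s c + max (s - c) 0 = s := fun s => by
    rcases le_total s c with hs | hs
    · rw [min_eq_left hs, max_eq_right (by linarith), add_zero]
    · rw [min_eq_right hs, max_eq_left (by linarith), add_sub_cancel]
  have hab : a + b = h := by linarith [hsplit t, hsplit (t + h)]
  calc h / max μ1 μ2 = a / max μ1 μ2 + b / max μ1 μ2 := by rw [← add_div, hab]
    _ ≤ a / μ1 + b / μ2 := by gcongr; exacts [le_max_left _ _, le_max_right _ _]
    _ = _ := by unfold cumIntensity; ring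

lemma muLe_eq_muRi_sub (t : ℝ) : muLe μ1 μ2 c h t = muRi μ1 μ2 c h (t - h) := by
  simp only [muLe, muRi, le_sub_iff_add_le, sub_add_cancel]

end ChangePoint

theorem tendstoUniformlyOn_window_div {μ1 μ2 c h T : ℝ} {N : ℕ → ℝ → ℝ}
    (hμ1 : 0 < μ1) (hμ2 : 0 < μ2) (hh : 0 < h)
    (hN : TendstoUniformlyOn (fun (n : ℕ) s => N n (n * s) / n) (cumIntensity μ1 μ2 c)
      atTop (Icc 0 T))
    {S : Set ℝ} (r : ℝ → ℝ) (hr : MapsTo r S (Icc 0 (T - h))) :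
    TendstoUniformlyOn
      (fun (n : ℕ) t => (N n (n * (r t + h)) - N n (n * r t)) / (n * h / muRi μ1 μ2 c h (r t)))
      (fun _ => 1) atTop S := by
  have hdiff : TendstoUniformlyOn
      (fun (n : ℕ) t => N n (n * (r t + h)) / n - N n (n * r t) / n)
      (fun t => cumIntensity μ1 μ2 c (r t + h) - cumIntensity μ1 μ2 c (r t)) atTop S :=
    ((hN.comp fun t => r t + h).mono fun t ht =>
        ⟨by linarith [(hr ht).1], by linarith [(hr ht).2]⟩).sub
      ((hN.comp r).mono fun t ht => ⟨(hr ht).1, by linarith [(hr ht).2]⟩)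
  refine (hdiff.div_limit_one (div_pos hh (lt_max_of_lt_left hμ1))
    fun t _ => div_max_le_cumIntensity_sub hμ1 hμ2 hh.le (r t)).congr
    (Eventually.of_forall fun n t _ => ?_)
  beta_reduce
  rw [cumIntensity_add_sub hh, ← sub_div, div_div, mul_div_assoc]

section Ncomp

variable {Ω : Type*} {ξ1 ξ2 : ℕ → Ω → ℝ} {ω : Ω} {μ1 μ2 c : ℝ}

lemma Ncomp_mono (hpos1 : ∀ i, 0 < ξ1 i ω) (hpos2 : ∀ i, 0 < ξ2 i ω)
    (hT1 : Tendsto (pSum ξ1 · ω) atTop atTop) (hT2 : Tendsto (pSum ξ2 · ω) atTop atTop)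
    (n : ℕ) {t t' : ℝ} (ht : 0 ≤ t) (htt' : t ≤ t') :
    Ncomp ξ1 ξ2 c n t ω ≤ Ncomp ξ1 ξ2 c n t' ω := by
  unfold Ncomp
  split_ifs with h h' h'
  · exact cnt_mono hpos1 hT1 ht htt'
  · exact (cnt_mono hpos1 hT1 ht h).trans (Nat.le_add_right _ _)
  · exact absurd (htt'.trans h') h
  · exact Nat.add_le_add_left (Nat.sub_le_sub_right (cnt_mono hpos2 hT2 (by linarith) htt') _) _

lemma tendsto_Ncomp_div (hpos1 : ∀ i, 0 < ξ1 i ω) (hpos2 : ∀ i, 0 < ξ2 i ω)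
    (hμ1 : 0 < μ1) (hμ2 : 0 < μ2)
    (hS1 : Tendsto (fun k : ℕ => pSum ξ1 k ω / k) atTop (𝓝 μ1))
    (hS2 : Tendsto (fun k : ℕ => pSum ξ2 k ω / k) atTop (𝓝 μ2)) (hc : 0 ≤ c)
    {s : ℝ} (hs : 0 ≤ s) :
    Tendsto (fun n : ℕ => (Ncomp ξ1 ξ2 c n (n * s) ω : ℝ) / n) atTop
      (𝓝 (cumIntensity μ1 μ2 c s)) := by
  rcases le_or_gt s c with hsc | hcs
  · have hlim : cumIntensity μ1 μ2 c s = s / μ1 := by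
      simp [cumIntensity, min_eq_left hsc, max_eq_right (sub_nonpos.mpr hsc)]
    rw [hlim]
    refine (tendsto_cnt_mul_div hpos1 hμ1 hS1 hs).congr fun n => ?_
    rw [Ncomp, if_pos (mul_le_mul_of_nonneg_left hsc n.cast_nonneg)]
  · have hlim : cumIntensity μ1 μ2 c s = c / μ1 + (s / μ2 - c / μ2) := by
      rw [cumIntensity, min_eq_right hcs.le, max_eq_left (sub_nonneg.mpr hcs.le), sub_div]
    rw [hlim]
    refine ((tendsto_cnt_mul_div hpos1 hμ1 hS1 hc).add
      ((tendsto_cnt_mul_div hpos2 hμ2 hS2 hs).sub (tendsto_cnt_mul_div hpos2 hμ2 hS2 hc))).congr' ?_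
    filter_upwards [eventually_gt_atTop 0] with n hn
    have hncs : (n : ℝ) * c < n * s := mul_lt_mul_of_pos_left hcs (by exact_mod_cast hn)
    rw [Ncomp, if_neg hncs.not_ge, Nat.cast_add, Nat.cast_sub
      (cnt_mono hpos2 (tendsto_pSum_atTop hμ2 hS2) (by positivity) hncs.le)]
    ring

theorem tendstoUniformlyOn_Ncomp_div (hpos1 : ∀ i, 0 < ξ1 i ω) (hpos2 : ∀ i, 0 < ξ2 i ω)
    (hμ1 : 0 < μ1) (hμ2 : 0 < μ2)
    (hS1 : Tendsto (fun k : ℕ => pSum ξ1 k ω / k) atTop (𝓝 μ1))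
    (hS2 : Tendsto (fun k : ℕ => pSum ξ2 k ω / k) atTop (𝓝 μ2)) (hc : 0 ≤ c) (T : ℝ) :
    TendstoUniformlyOn (fun (n : ℕ) s => (Ncomp ξ1 ξ2 c n (n * s) ω : ℝ) / n)
      (cumIntensity μ1 μ2 c) atTop (Icc 0 T) := by
  refine tendstoUniformlyOn_Icc_of_monotoneOn (fun n s hs s' _ hss' => ?_)
    continuous_cumIntensity.continuousOn
    fun s hs => tendsto_Ncomp_div hpos1 hpos2 hμ1 hμ2 hS1 hS2 hc hs.1
  gcongr
  exact Ncomp_mono hpos1 hpos2 (tendsto_pSum_atTop hμ1 hS1) (tendsto_pSum_atTop hμ2 hS2) n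
    (mul_nonneg n.cast_nonneg hs.1) (mul_le_mul_of_nonneg_left hss' n.cast_nonneg)

end Ncomp

lemma ae_tendsto_pSum_div {Ω : Type*} [MeasurableSpace Ω] {P : Measure Ω} {ξ : ℕ → Ω → ℝ}
    (hint : Integrable (ξ 1) P) (hindep : Pairwise fun i j => IndepFun (ξ i) (ξ j) P)
    (hident : ∀ i, IdentDistrib (ξ i) (ξ 1) P P) :
    ∀ᵐ ω ∂P, Tendsto (fun k : ℕ => pSum ξ k ω / k) atTop (𝓝 (∫ ω, ξ 1 ω ∂P)) := by
  simpa only [pSum_eq_sum_range] using strong_law_ae_real (fun i => ξ (i + 1)) hint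
    (fun i j hij => hindep (by simpa using hij)) fun i => (hident (i + 1)).trans (hident 1).symm

theorem window_counts_changepoint_tendstoUniformlyOn_ae_general
    {Ω : Type*} [MeasurableSpace Ω] (P : Measure Ω) [IsProbabilityMeasure P]
    (ξ1 ξ2 : ℕ → Ω → ℝ)
    (hindep : iIndepFun (Sum.elim ξ1 ξ2 : ℕ ⊕ ℕ → Ω → ℝ) P)
    (hident1 : ∀ i, IdentDistrib (ξ1 i) (ξ1 1) P P)
    (hident2 : ∀ i, IdentDistrib (ξ2 i) (ξ2 1) P P)
    (hpos1 : ∀ i, ∀ᵐ ω ∂P, 0 < ξ1 i ω) (hpos2 : ∀ i, ∀ᵐ ω ∂P, 0 < ξ2 i ω)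
    (hL41 : MemLp (ξ1 1) 4 P) (hL42 : MemLp (ξ2 1) 4 P)
    (μ1 μ2 : ℝ) (hμ1 : μ1 = ∫ ω, ξ1 1 ω ∂P) (hμ2 : μ2 = ∫ ω, ξ2 1 ω ∂P)
    (hμ1pos : 0 < μ1) (hμ2pos : 0 < μ2)
    (T c h : ℝ) (hc : 0 < c) (hh : 0 < h) :
    ∀ᵐ ω ∂P,
      TendstoUniformlyOn
        (fun (n : ℕ) (t : ℝ) =>
          ((Ncomp ξ1 ξ2 c n ((n : ℝ) * (t + h)) ω : ℝ)
              - (Ncomp ξ1 ξ2 c n ((n : ℝ) * t) ω : ℝ))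
            / ((n : ℝ) * h / muRi μ1 μ2 c h t))
        (fun _ => 1) atTop (Set.Icc h (T - h)) ∧
      TendstoUniformlyOn
        (fun (n : ℕ) (t : ℝ) =>
          ((Ncomp ξ1 ξ2 c n ((n : ℝ) * t) ω : ℝ)
              - (Ncomp ξ1 ξ2 c n ((n : ℝ) * (t - h)) ω : ℝ))
            / ((n : ℝ) * h / muLe μ1 μ2 c h t))
        (fun _ => 1) atTop (Set.Icc h (T - h)) := by
  subst hμ1 hμ2
  have hS1 := ae_tendsto_pSum_div (hL41.integrable (by norm_num))
    (fun i j hij => hindep.indepFun (Sum.inl_injective.ne hij)) hident1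
  have hS2 := ae_tendsto_pSum_div (hL42.integrable (by norm_num))
    (fun i j hij => hindep.indepFun (Sum.inr_injective.ne hij)) hident2
  filter_upwards [hS1, hS2, ae_all_iff.mpr hpos1, ae_all_iff.mpr hpos2]
    with ω hS1 hS2 hpos1 hpos2
  have hN := tendstoUniformlyOn_Ncomp_div hpos1 hpos2 hμ1pos hμ2pos hS1 hS2 hc.le T
  have hwindow := tendstoUniformlyOn_window_div (N := fun n t => (Ncomp ξ1 ξ2 c n t ω : ℝ))
    (S := Icc h (T - h)) hμ1pos hμ2pos hh hN
  constructor
  · exact hwindow (fun t => t) fun t ht => ⟨by linarith [ht.1], ht.2⟩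
  · simpa only [sub_add_cancel, muLe_eq_muRi_sub] using
      hwindow (fun t => t - h) fun t ht => ⟨by linarith [ht.1], by linarith [ht.2]⟩

/-- in the change-point renewal model, almost surely
`sup_{t ∈ [h,T−h]} |(N_{n(t+h)} − N_{nt})/(nh/μ_ri(h,t)) − 1| → 0` and
`sup_{t ∈ [h,T−h]} |(N_{nt} − N_{n(t−h)})/(nh/μ_le(h,t)) − 1| → 0` as `n → ∞`. -/
theorem window_counts_changepoint_tendstoUniformlyOn_ae
    {Ω : Type*} [MeasurableSpace Ω] (P : Measure Ω) [IsProbabilityMeasure P]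
    (ξ1 ξ2 : ℕ → Ω → ℝ)
    (hmeas1 : ∀ i, Measurable (ξ1 i)) (hmeas2 : ∀ i, Measurable (ξ2 i))
    (hindep : iIndepFun (Sum.elim ξ1 ξ2 : ℕ ⊕ ℕ → Ω → ℝ) P)
    (hident1 : ∀ i, IdentDistrib (ξ1 i) (ξ1 1) P P)
    (hident2 : ∀ i, IdentDistrib (ξ2 i) (ξ2 1) P P)
    (hpos1 : ∀ i, ∀ᵐ ω ∂P, 0 < ξ1 i ω) (hpos2 : ∀ i, ∀ᵐ ω ∂P, 0 < ξ2 i ω)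
    (hL41 : MemLp (ξ1 1) 4 P) (hL42 : MemLp (ξ2 1) 4 P)
    (μ1 μ2 : ℝ) (hμ1 : μ1 = ∫ ω, ξ1 1 ω ∂P) (hμ2 : μ2 = ∫ ω, ξ2 1 ω ∂P)
    (hμ1pos : 0 < μ1) (hμ2pos : 0 < μ2) (hμne : μ1 ≠ μ2)
    (T c h : ℝ) (hT : 0 < T) (hc : 0 < c) (hcT : c < T) (hh : 0 < h) (hhT : h ≤ T / 2) :
    ∀ᵐ ω ∂P,
      TendstoUniformlyOn
        (fun (n : ℕ) (t : ℝ) =>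
          ((Ncomp ξ1 ξ2 c n ((n : ℝ) * (t + h)) ω : ℝ)
              - (Ncomp ξ1 ξ2 c n ((n : ℝ) * t) ω : ℝ))
            / ((n : ℝ) * h / muRi μ1 μ2 c h t))
        (fun _ => 1) atTop (Set.Icc h (T - h)) ∧
      TendstoUniformlyOn
        (fun (n : ℕ) (t : ℝ) =>
          ((Ncomp ξ1 ξ2 c n ((n : ℝ) * t) ω : ℝ)
              - (Ncomp ξ1 ξ2 c n ((n : ℝ) * (t - h)) ω : ℝ))
            / ((n : ℝ) * h / muLe μ1 μ2 c h t))
        (fun _ => 1) atTop (Set.Icc h (T - h)) :=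
  window_counts_changepoint_tendstoUniformlyOn_ae_general P ξ1 ξ2 hindep hident1 hident2 hpos1 hpos2
    hL41 hL42 μ1 μ2 hμ1 hμ2 hμ1pos hμ2pos T c h hc hh
end
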